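/- Let T and T̂ be operators on ℝ^{X×A} (Q-factors on finite X × A) defined by (TQ)(i,a) = c(i,a) + ϑ σ_{Pᵢᵃ}(v_Q) and (T̂Q)(i,a) = c(i,a) + ϑ σ_{P̂ᵢᵃ}(v_Q), where v_Q(j) = min_{a'} Q(j,a'). If Q* is the fixed point of T and Q' is the fixed point of T̂, then ‖Q' − Q*‖_∞ = ϑ max_{i,a} |σ_{P̂ᵢᵃ}(v_{Q'}) − σ_{Pᵢᵃ}(v_{Q*})| ≥ ϑ (max_{i,a} |σ_{P̂ᵢᵃ}(v_{Q*}) − σ_{Pᵢᵃ}(v_{Q*})|) − ϑ(1+β)‖Q' − Q*‖_∞, where β bounds the support-function overestimate as usual. In particular, if T is the nominal operator (Pᵢᵃ = {pᵢᵃ} singletons in the simplex) then the nominal fixed point can differ from the robust fixed point by as much as ϑ max_{i,a} σ_{Ûᵢᵃ}(v*) /(1 + ϑ(1+β)) in ℓ∞ norm. -/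
import Mathlib


open Finset

noncomputable def dot {X : Type*} [Fintype X] (q v : X → ℝ) : ℝ := ∑ i, q i * v i

noncomputable def supp {X : Type*} [Fintype X] (S : Set (X → ℝ)) (v : X → ℝ) : ℝ :=
  sSup ((fun q => dot q v) '' S)

noncomputable def linf {X : Type*} [Fintype X] (v : X → ℝ) : ℝ := ⨆ i, |v i|

def simplex (X : Type*) [Fintype X] : Set (X → ℝ) :=
  {q | (∀ i, 0 ≤ q i) ∧ ∑ i, q i = 1}

noncomputable def vQ {X A : Type*} [Fintype A] (Q : X × A → ℝ) : X → ℝ :=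
  fun j => ⨅ a, Q (j, a)

section Aux

variable {X : Type*} [Fintype X]

lemma contDot (v : X → ℝ) : Continuous fun q : X → ℝ => dot q v := by
  unfold dot
  exact continuous_finset_sum _ fun i _ => (continuous_apply i).mul continuous_const

lemma suppBdd {S : Set (X → ℝ)} (hS : IsCompact S) (v : X → ℝ) :
    BddAbove ((fun q => dot q v) '' S) := (hS.image (contDot v)).bddAbove

lemma le_supp {S : Set (X → ℝ)} (hS : IsCompact S) {q : X → ℝ} (hq : q ∈ S) (v : X → ℝ) :
    dot q v ≤ supp S v := le_csSup (suppBdd hS v) ⟨q, hq, rfl⟩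

lemma supp_le {S : Set (X → ℝ)} (hne : S.Nonempty) {v : X → ℝ} {M : ℝ}
    (h : ∀ q ∈ S, dot q v ≤ M) : supp S v ≤ M :=
  csSup_le (hne.image _) (by rintro _ ⟨q, hq, rfl⟩; exact h q hq)

lemma linfBdd (v : X → ℝ) : BddAbove (Set.range fun i => |v i|) :=
  (Set.finite_range _).bddAbove

lemma abs_le_linf (v : X → ℝ) (i : X) : |v i| ≤ linf v := le_ciSup (linfBdd v) i

lemma linf_le [Nonempty X] {v : X → ℝ} {M : ℝ} (h : ∀ i, |v i| ≤ M) : linf v ≤ M :=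
  ciSup_le h

lemma dot_sub (q p v : X → ℝ) : dot (q - p) v = dot q v - dot p v := by
  simp [dot, sub_mul, Finset.sum_sub_distrib]

lemma dot_add_right (q u w : X → ℝ) : dot q (u + w) = dot q u + dot q w := by
  simp [dot, mul_add, Finset.sum_add_distrib]

lemma supp_subadd {S : Set (X → ℝ)} (hS : IsCompact S) (hne : S.Nonempty) (u w : X → ℝ) :
    supp S (u + w) ≤ supp S u + supp S w :=
  supp_le hne fun q hq => by
    rw [dot_add_right]; exact add_le_add (le_supp hS hq u) (le_supp hS hq w)

lemma supp_le_linf [Nonempty X] {S : Set (X → ℝ)} (hne : S.Nonempty)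
    (hsub : S ⊆ simplex X) (v : X → ℝ) : supp S v ≤ linf v := by
  refine supp_le hne fun q hq => ?_
  obtain ⟨hq0, hq1⟩ := hsub hq
  calc ∑ i, q i * v i ≤ ∑ i, q i * linf v :=
        Finset.sum_le_sum fun i _ =>
          mul_le_mul_of_nonneg_left ((le_abs_self _).trans (abs_le_linf v i)) (hq0 i)
    _ = linf v := by rw [← Finset.sum_mul, hq1, one_mul]

lemma linf_sub_comm (u w : X → ℝ) :
    linf (fun i => u i - w i) = linf (fun i => w i - u i) := by
  unfold linf; simp_rw [abs_sub_comm]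

lemma exists_iInf_eq {A : Type*} [Fintype A] [Nonempty A] (f : A → ℝ) :
    ∃ a, (⨅ b, f b) = f a ∧ ∀ b, f a ≤ f b := by
  obtain ⟨a, ha⟩ := Finite.exists_min f
  exact ⟨a, le_antisymm (ciInf_le ((Set.finite_range f).bddBelow) a) (le_ciInf ha), ha⟩

lemma vQ_lip {A : Type*} [Fintype A] [Nonempty A] (Q1 Q2 : X × A → ℝ) (j : X) :
    |vQ Q1 j - vQ Q2 j| ≤ linf (fun ia => Q1 ia - Q2 ia) := by
  rw [abs_sub_le_iff]
  constructor
  · obtain ⟨a, ha, _⟩ := exists_iInf_eq fun a => Q2 (j, a)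
    have h1 : vQ Q1 j ≤ Q1 (j, a) := ciInf_le ((Set.finite_range _).bddBelow) a
    have h2 : Q1 (j, a) - Q2 (j, a) ≤ linf (fun ia => Q1 ia - Q2 ia) :=
      (le_abs_self _).trans (abs_le_linf (fun ia => Q1 ia - Q2 ia) (j, a))
    have : vQ Q2 j = Q2 (j, a) := ha
    simp only [vQ] at h1 ⊢
    linarith
  · obtain ⟨a, ha, _⟩ := exists_iInf_eq fun a => Q1 (j, a)
    have h1 : vQ Q2 j ≤ Q2 (j, a) := ciInf_le ((Set.finite_range _).bddBelow) a
    have h2 : Q2 (j, a) - Q1 (j, a) ≤ linf (fun ia => Q1 ia - Q2 ia) := by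
      have := abs_le_linf (fun ia => Q1 ia - Q2 ia) (j, a)
      have h' : |Q1 (j, a) - Q2 (j, a)| ≤ linf (fun ia => Q1 ia - Q2 ia) := this
      linarith [neg_abs_le (Q1 (j, a) - Q2 (j, a))]
    have : vQ Q1 j = Q1 (j, a) := ha
    simp only [vQ] at h1 ⊢
    linarith

end Aux

theorem stmt14 {X A : Type*} [Fintype X] [Fintype A] [Nonempty X] [Nonempty A]
    (c : X × A → ℝ) (ϑ : ℝ) (hϑ0 : 0 < ϑ) (hϑ1 : ϑ < 1)
    (P Ph : X × A → Set (X → ℝ))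
    (hPc : ∀ ia, IsCompact (P ia)) (hPne : ∀ ia, (P ia).Nonempty)
    (hPsimplex : ∀ ia, P ia ⊆ simplex X)
    (hPhc : ∀ ia, IsCompact (Ph ia)) (hPhne : ∀ ia, (Ph ia).Nonempty)
    (β : ℝ) (hβ : 0 ≤ β)
    (hover : ∀ ia, ∀ v : X → ℝ, supp (Ph ia) v ≤ supp (P ia) v + β * linf v)
    (T Th : (X × A → ℝ) → (X × A → ℝ))
    (hT : ∀ Q ia, T Q ia = c ia + ϑ * supp (P ia) (vQ Q))
    (hTh : ∀ Q ia, Th Q ia = c ia + ϑ * supp (Ph ia) (vQ Q))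
    (Qstar Q' : X × A → ℝ)
    (hQstar : T Qstar = Qstar) (hQ' : Th Q' = Q') :
    (linf (fun ia => Q' ia - Qstar ia) =
      ϑ * ⨆ ia, |supp (Ph ia) (vQ Q') - supp (P ia) (vQ Qstar)|) ∧
    (linf (fun ia => Q' ia - Qstar ia) ≥
      ϑ * (⨆ ia, |supp (Ph ia) (vQ Qstar) - supp (P ia) (vQ Qstar)|) -
        ϑ * (1 + β) * linf (fun ia => Q' ia - Qstar ia)) ∧
    (∀ p₀ : X × A → (X → ℝ), (∀ ia, p₀ ia ∈ simplex X) → (∀ ia, P ia = {p₀ ia}) →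
      linf (fun ia => Q' ia - Qstar ia) ≥
        ϑ * (⨆ ia, supp ((fun q => q - p₀ ia) '' Ph ia) (vQ Qstar)) /
          (1 + ϑ * (1 + β))) := by
  set D := linf (fun ia => Q' ia - Qstar ia) with hD
  set g : X × A → ℝ := fun ia => supp (Ph ia) (vQ Q') - supp (P ia) (vQ Qstar) with hg
  have hfix : ∀ ia, Q' ia - Qstar ia = ϑ * g ia := by
    intro ia
    conv_lhs => rw [← hQ', ← hQstar]
    rw [hTh, hT, hg]; ring
  -- Part 1
  have part1 : D = ϑ * ⨆ ia, |g ia| := by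
    rw [hD]
    unfold linf
    calc (⨆ ia, |Q' ia - Qstar ia|) = ⨆ ia, ϑ * |g ia| := by
          congr 1; funext ia; rw [hfix ia, abs_mul, abs_of_pos hϑ0]
      _ = ϑ * ⨆ ia, |g ia| := (Real.mul_iSup_of_nonneg hϑ0.le _).symm
  -- Lipschitz bound for supp (Ph ia)
  have hlip : ∀ ia, |supp (Ph ia) (vQ Qstar) - supp (Ph ia) (vQ Q')| ≤ (1 + β) * D := by
    intro ia
    have key : ∀ u w : X → ℝ,
        supp (Ph ia) u - supp (Ph ia) w ≤ (1 + β) * linf (fun j => u j - w j) := by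
      intro u w
      have hsub : supp (Ph ia) u ≤ supp (Ph ia) (u - w) + supp (Ph ia) w := by
        have := supp_subadd (hPhc ia) (hPhne ia) (u - w) w
        simpa using this
      have h1 : supp (Ph ia) (u - w) ≤ supp (P ia) (u - w) + β * linf (u - w) :=
        hover ia (u - w)
      have h2 : supp (P ia) (u - w) ≤ linf (u - w) :=
        supp_le_linf (hPne ia) (hPsimplex ia) (u - w)
      have heq : linf (u - w) = linf (fun j => u j - w j) := rfl
      rw [heq] at h1 h2
      nlinarith
    have hDbound : ∀ u w : X × A → ℝ,
        linf (fun j => vQ u j - vQ w j) ≤ linf (fun ia => u ia - w ia) :=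
      fun u w => linf_le fun j => vQ_lip u w j
    have hDs : linf (fun j => vQ Qstar j - vQ Q' j) ≤ D := by
      calc linf (fun j => vQ Qstar j - vQ Q' j)
          ≤ linf (fun ia => Qstar ia - Q' ia) := hDbound Qstar Q'
        _ = D := by rw [hD]; exact linf_sub_comm _ _
    have hDs' : linf (fun j => vQ Q' j - vQ Qstar j) ≤ D := by
      rw [linf_sub_comm]; exact hDs
    rw [abs_sub_le_iff]
    constructor
    · exact (key (vQ Qstar) (vQ Q')).trans (mul_le_mul_of_nonneg_left hDs (by linarith))
    · exact (key (vQ Q') (vQ Qstar)).trans (mul_le_mul_of_nonneg_left hDs' (by linarith))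
  -- Part 2
  have bddg : BddAbove (Set.range fun ia => |g ia|) := (Set.finite_range _).bddAbove
  have part2 : D ≥ ϑ * (⨆ ia, |supp (Ph ia) (vQ Qstar) - supp (P ia) (vQ Qstar)|) -
      ϑ * (1 + β) * D := by
    have hS : (⨆ ia, |supp (Ph ia) (vQ Qstar) - supp (P ia) (vQ Qstar)|) ≤
        (1 + β) * D + ⨆ ia, |g ia| := by
      refine ciSup_le fun ia => ?_
      calc |supp (Ph ia) (vQ Qstar) - supp (P ia) (vQ Qstar)|
          ≤ |supp (Ph ia) (vQ Qstar) - supp (Ph ia) (vQ Q')| +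
            |supp (Ph ia) (vQ Q') - supp (P ia) (vQ Qstar)| := abs_sub_le _ _ _
        _ ≤ (1 + β) * D + ⨆ ia, |g ia| :=
            add_le_add (hlip ia) (le_ciSup bddg ia)
    have h1 : ϑ * (⨆ ia, |supp (Ph ia) (vQ Qstar) - supp (P ia) (vQ Qstar)|) ≤
        ϑ * ((1 + β) * D + ⨆ ia, |g ia|) := mul_le_mul_of_nonneg_left hS hϑ0.le
    nlinarith [part1]
  refine ⟨part1, part2, ?_⟩
  -- Part 3
  intro p₀ hp₀ hP
  have hsuppP : ∀ ia v, supp (P ia) v = dot (p₀ ia) v := by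
    intro ia v; rw [hP ia]; simp [supp, Set.image_singleton]
  have hU : ∀ ia, supp ((fun q => q - p₀ ia) '' Ph ia) (vQ Qstar) ≤
      supp (Ph ia) (vQ Qstar) - supp (P ia) (vQ Qstar) := by
    intro ia
    rw [hsuppP]
    refine supp_le ((hPhne ia).image _) ?_
    rintro _ ⟨r, hr, rfl⟩
    rw [dot_sub]
    exact sub_le_sub_right (le_supp (hPhc ia) hr _) _
  have hU2 : (⨆ ia, supp ((fun q => q - p₀ ia) '' Ph ia) (vQ Qstar)) ≤
      ⨆ ia, |supp (Ph ia) (vQ Qstar) - supp (P ia) (vQ Qstar)| := by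
    have bdd2 : BddAbove (Set.range fun ia =>
        |supp (Ph ia) (vQ Qstar) - supp (P ia) (vQ Qstar)|) := (Set.finite_range _).bddAbove
    exact ciSup_le fun ia => (hU ia).trans ((le_abs_self _).trans (le_ciSup bdd2 ia))
  have hden : (0:ℝ) < 1 + ϑ * (1 + β) := by positivity
  rw [ge_iff_le, div_le_iff₀ hden]
  have h1 : ϑ * (⨆ ia, supp ((fun q => q - p₀ ia) '' Ph ia) (vQ Qstar)) ≤
      ϑ * ⨆ ia, |supp (Ph ia) (vQ Qstar) - supp (P ia) (vQ Qstar)| :=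
    mul_le_mul_of_nonneg_left hU2 hϑ0.le
  nlinarith [part2]
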